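/- Let d ≥ 1, P ⊆ ℝ^d, and let e_1 denote the first standard unit vector of ℝ^d. Let h, h' be length scales with 4 ≤ h ≤ h', let a ≥ 0 and a ≤ s ≤ a + 1, and suppose there exists a point x* ∈ P with |x* − (a+1)e_1| ≤ h/4. Then (as inequalities in [0,∞]): (i) d_{h',P}(0, s·e_1) ≤ d_{h,P}(0, a·e_1) + h, and (ii) d_{h',P}(0, (a+1)·e_1) ≤ d_{h',P}(0, s·e_1) + h'. -/

import Mathlib

open scoped ENNReal

noncomputable section

/-- A point in Euclidean space `ℝ^d`. -/
abbrev Pt (d : ℕ) := EuclideanSpace ℝ (Fin d)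

/-- `p = (p₀, …, p_m)` is an admissible path in `P` from `x` to `y` with step size `h`:
all its points lie in `P`, the first point is within `h/2` of `x`, the last within `h/2`
of `y`, and consecutive points are at distance at most `h`. (A path with `m + 1` points
corresponds to a path with `m` elements in the paper, which is always nonempty.) -/
def IsPath {d : ℕ} (P : Set (Pt d)) (h : ℝ) (x y : Pt d) {m : ℕ}
    (p : Fin (m + 1) → Pt d) : Prop :=
  (∀ i, p i ∈ P) ∧ dist x (p 0) ≤ h / 2 ∧ dist y (p (Fin.last m)) ≤ h / 2 ∧
    ∀ i : Fin m, dist (p i.castSucc) (p i.succ) ≤ h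

/-- The length `L(p)` of a path: the sum of the lengths of its hops. -/
def pathLength {d m : ℕ} (p : Fin (m + 1) → Pt d) : ℝ :=
  ∑ i : Fin m, dist (p i.castSucc) (p i.succ)

/-- The distance `d_{h,P}(x,y) ∈ [0,∞]`: the infimum of the lengths of admissible
paths in `P` from `x` to `y` with step size `h` (equal to `+∞` if there is none). -/
def graphDist {d : ℕ} (P : Set (Pt d)) (h : ℝ) (x y : Pt d) : ℝ≥0∞ :=
  ⨅ (m : ℕ) (p : Fin (m + 1) → Pt d) (_ : IsPath P h x y p),
    ENNReal.ofReal (pathLength p)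

/-!
Both inequalities come from appending one point to an admissible path. Take the point
`x* ∈ P` near `(a+1)e₁`: the endpoint of any path ending near `a e₁` (resp. `s e₁`) lies
within `h/2 + 1 + h/4 ≤ h` (resp. `h'/2 + 1 + h/4 ≤ h'`) of `x*`, so appending `x*` is a
legal step that costs at most `h` (resp. `h'`), and the extended path ends within `h'/2` of
`s e₁` (resp. `(a+1)e₁`), because `1 + h/4 ≤ h/2` when `h ≥ 4`.
-/

namespace IsPath

variable {d m : ℕ} {P : Set (Pt d)} {h : ℝ} {x y : Pt d} {p : Fin (m + 1) → Pt d}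

lemma mono (hp : IsPath P h x y p) {h' : ℝ} (hh' : h ≤ h') : IsPath P h' x y p := by
  obtain ⟨hmem, hx, hy, hstep⟩ := hp
  exact ⟨hmem, by linarith, by linarith, fun i => (hstep i).trans hh'⟩

lemma snoc (hp : IsPath P h x y p) {z w : Pt d} (hw : w ∈ P)
    (hstep : dist (p (Fin.last m)) w ≤ h) (hz : dist z w ≤ h / 2) :
    IsPath P h x z (Fin.snoc p w : Fin (m + 1 + 1) → Pt d) := by
  obtain ⟨hmem, hx, -, hsteps⟩ := hp
  refine ⟨Fin.lastCases (by simpa using hw) (fun i => by simpa using hmem i), ?_, ?_, ?_⟩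
  · rwa [← Fin.castSucc_zero, Fin.snoc_castSucc]
  · simpa using hz
  · refine Fin.lastCases (by simpa [Fin.succ_last] using hstep) fun i => ?_
    simpa [-Fin.castSucc_succ, Fin.succ_castSucc] using hsteps i

end IsPath

lemma pathLength_nonneg {d m : ℕ} (p : Fin (m + 1) → Pt d) : 0 ≤ pathLength p :=
  Finset.sum_nonneg fun _ _ => dist_nonneg

lemma pathLength_snoc {d m : ℕ} (p : Fin (m + 1) → Pt d) (w : Pt d) :
    pathLength (Fin.snoc p w : Fin (m + 1 + 1) → Pt d) =
      pathLength p + dist (p (Fin.last m)) w := by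
  rw [pathLength, Fin.sum_univ_castSucc]
  simp [pathLength, -Fin.castSucc_succ, Fin.succ_castSucc, Fin.succ_last]

lemma graphDist_le_pathLength {d m : ℕ} {P : Set (Pt d)} {h : ℝ} {x y : Pt d}
    {p : Fin (m + 1) → Pt d} (hp : IsPath P h x y p) :
    graphDist P h x y ≤ ENNReal.ofReal (pathLength p) :=
  iInf_le_of_le m <| iInf_le_of_le p <| iInf_le _ hp

lemma le_graphDist_add {d : ℕ} {P : Set (Pt d)} {h : ℝ} {x y : Pt d} {r c : ℝ≥0∞}
    (H : ∀ (m : ℕ) (p : Fin (m + 1) → Pt d), IsPath P h x y p →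
      r ≤ ENNReal.ofReal (pathLength p) + c) :
    r ≤ graphDist P h x y + c := by
  simp only [graphDist, ENNReal.iInf_add]
  exact le_iInf fun m => le_iInf fun p => le_iInf (H m p)

lemma graphDist_le_graphDist_add {d : ℕ} {P : Set (Pt d)} {h h' c : ℝ} {x y z w : Pt d}
    (hw : w ∈ P) (hhh' : h ≤ h') (hch' : c ≤ h') (hyw : h / 2 + dist y w ≤ c)
    (hzw : dist z w ≤ h' / 2) :
    graphDist P h' x z ≤ graphDist P h x y + ENNReal.ofReal c := by
  refine le_graphDist_add fun m p hp => ?_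
  have hlast : dist (p (Fin.last m)) w ≤ c := by
    linarith [dist_triangle_left (p (Fin.last m)) w y, hp.2.2.1]
  calc graphDist P h' x z
      ≤ ENNReal.ofReal (pathLength (Fin.snoc p w : Fin (m + 1 + 1) → Pt d)) :=
        graphDist_le_pathLength ((hp.mono hhh').snoc hw (hlast.trans hch') hzw)
    _ ≤ ENNReal.ofReal (pathLength p) + ENNReal.ofReal c := by
        rw [pathLength_snoc, ENNReal.ofReal_add (pathLength_nonneg p) dist_nonneg]
        gcongr

lemma dist_smul_smul_of_norm_eq_one {E : Type*} [SeminormedAddCommGroup E] [NormedSpace ℝ E]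
    {e : E} (he : ‖e‖ = 1) (t u : ℝ) : dist (t • e) (u • e) = |t - u| := by
  rw [dist_eq_norm, ← sub_smul, norm_smul, he, mul_one, Real.norm_eq_abs]

theorem graphDist_interpolation_general {d : ℕ} (hd : 0 < d) (P : Set (Pt d)) (h h' : ℝ)
    (h4 : 4 ≤ h) (hhh' : h ≤ h') (a s : ℝ) (has : a ≤ s) (hsa : s ≤ a + 1)
    (hstar : ∃ xstar ∈ P,
      dist xstar ((a + 1) • EuclideanSpace.single (⟨0, hd⟩ : Fin d) (1 : ℝ)) ≤ h / 4) :
    graphDist P h' 0 (s • EuclideanSpace.single (⟨0, hd⟩ : Fin d) (1 : ℝ)) ≤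
        graphDist P h 0 (a • EuclideanSpace.single (⟨0, hd⟩ : Fin d) (1 : ℝ)) +
          ENNReal.ofReal h ∧
      graphDist P h' 0 ((a + 1) • EuclideanSpace.single (⟨0, hd⟩ : Fin d) (1 : ℝ)) ≤
        graphDist P h' 0 (s • EuclideanSpace.single (⟨0, hd⟩ : Fin d) (1 : ℝ)) +
          ENNReal.ofReal h' := by
  obtain ⟨xstar, hxP, hx⟩ := hstar
  set e : Pt d := EuclideanSpace.single (⟨0, hd⟩ : Fin d) (1 : ℝ)
  have hdist := dist_smul_smul_of_norm_eq_one (show ‖e‖ = 1 by simp [e])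
  have ha_x : dist (a • e) xstar ≤ 1 + h / 4 := by
    have := dist_triangle (a • e) ((a + 1) • e) xstar
    rw [hdist, show a - (a + 1) = -1 by ring, abs_neg, abs_one, dist_comm ((a + 1) • e)] at this
    linarith
  have hs_x : dist (s • e) xstar ≤ 1 + h / 4 := by
    have := dist_triangle (s • e) ((a + 1) • e) xstar
    rw [hdist, abs_of_nonpos (by linarith), dist_comm ((a + 1) • e)] at this
    linarith
  exact ⟨graphDist_le_graphDist_add hxP hhh' hhh' (by linarith) (by linarith),
    graphDist_le_graphDist_add hxP le_rfl le_rfl (by linarith) (by rw [dist_comm]; linarith)⟩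

/-- **Comparison of distances along `e₁`.** Let `e₁` be the first standard unit vector,
let `4 ≤ h ≤ h'`, `0 ≤ a`, `a ≤ s ≤ a + 1`, and assume there is a point `x* ∈ P` with
`|x* - (a+1)e₁| ≤ h/4`. Then (i) `d_{h',P}(0, s e₁) ≤ d_{h,P}(0, a e₁) + h` and
(ii) `d_{h',P}(0, (a+1) e₁) ≤ d_{h',P}(0, s e₁) + h'`, as inequalities in `[0,∞]`. -/
theorem graphDist_interpolation {d : ℕ} (hd : 0 < d) (P : Set (Pt d)) (h h' : ℝ)
    (h4 : 4 ≤ h) (hhh' : h ≤ h') (a s : ℝ) (ha : 0 ≤ a) (has : a ≤ s) (hsa : s ≤ a + 1)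
    (hstar : ∃ xstar ∈ P,
      dist xstar ((a + 1) • EuclideanSpace.single (⟨0, hd⟩ : Fin d) (1 : ℝ)) ≤ h / 4) :
    graphDist P h' 0 (s • EuclideanSpace.single (⟨0, hd⟩ : Fin d) (1 : ℝ)) ≤
        graphDist P h 0 (a • EuclideanSpace.single (⟨0, hd⟩ : Fin d) (1 : ℝ)) +
          ENNReal.ofReal h ∧
      graphDist P h' 0 ((a + 1) • EuclideanSpace.single (⟨0, hd⟩ : Fin d) (1 : ℝ)) ≤
        graphDist P h' 0 (s • EuclideanSpace.single (⟨0, hd⟩ : Fin d) (1 : ℝ)) +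
          ENNReal.ofReal h' :=
  graphDist_interpolation_general hd P h h' h4 hhh' a s has hsa hstar
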